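/- Let G = (X, E) be a binary graph admitting a genlex Hamilton path L = x_1,...,x_ℓ. Then the greedy algorithm that starts at x_1, and at each visited vertex x moves to an unvisited neighbor y of x minimizing λ(x,y) (breaking ties by choosing the vertex appearing earliest in L), visits exactly the sequence x_1,...,x_ℓ. -/

import Mathlib

def lamPos {n : ℕ} (x y : Fin n → Bool) : ℕ :=
  (Finset.univ.filter (fun i : Fin n => x i ≠ y i)).sup (fun i => (i : ℕ) + 1)

def hamming {n : ℕ} (x y : Fin n → Bool) : ℕ :=
  (Finset.univ.filter (fun i : Fin n => x i ≠ y i)).card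

def sameSuffix {n : ℕ} (k : ℕ) (x y : Fin n → Bool) : Prop :=
  ∀ i : Fin n, n - k ≤ (i : ℕ) → x i = y i

def IsOrdering {n : ℕ} (X : Finset (Fin n → Bool)) (L : List (Fin n → Bool)) : Prop :=
  L.Nodup ∧ ∀ x, x ∈ L ↔ x ∈ X

def IsGenlex {n : ℕ} (L : List (Fin n → Bool)) : Prop :=
  ∀ (k i j m : ℕ) (hij : i ≤ j) (hjm : j ≤ m) (hm : m < L.length),
    sameSuffix k (L.get ⟨i, by omega⟩) (L.get ⟨m, hm⟩) →
    sameSuffix k (L.get ⟨i, by omega⟩) (L.get ⟨j, by omega⟩)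

def cost {n : ℕ} (L : List (Fin n → Bool)) : ℕ :=
  (L.zipWith lamPos L.tail).sum


/-! The greedy walk can only leave the prefix `x_1, …, x_k` it has already copied from `L` at the
vertex `x_k`.  In a genlex ordering, `λ(x_k, x_j)` is monotone in `j ≥ k`, because a common suffix of
`x_k` and `x_j` is shared by everything listed between them.  So the next vertex `x_{k+1}` of `L`,
an unvisited neighbour of `x_k`, minimises `λ`, and among the minimisers it comes first in `L`: the
greedy walk moves to it.  Once the walk has copied a proper prefix of `L` it is never stuck, since
the following vertex of `L` is an unvisited neighbour. -/

lemma lamPos_le {n : ℕ} (x y : Fin n → Bool) : lamPos x y ≤ n :=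
  Finset.sup_le fun i _ => i.2

lemma sameSuffix_lamPos {n : ℕ} (x y : Fin n → Bool) : sameSuffix (n - lamPos x y) x y := by
  intro i hi
  by_contra h
  have : (i : ℕ) + 1 ≤ lamPos x y :=
    Finset.le_sup (f := fun i : Fin n => (i : ℕ) + 1) (by simpa using h)
  have := lamPos_le x y
  omega

lemma lamPos_le_of_sameSuffix {n k : ℕ} {x y : Fin n → Bool} (h : sameSuffix k x y) :
    lamPos x y ≤ n - k := by
  refine Finset.sup_le fun i hi => ?_
  by_contra hlt
  exact (Finset.mem_filter.mp hi).2 (h i (by omega))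

lemma IsGenlex.lamPos_mono {n : ℕ} {L : List (Fin n → Bool)} (hgen : IsGenlex L)
    {i j m : ℕ} (hij : i ≤ j) (hjm : j ≤ m) (hm : m < L.length) :
    lamPos L[i] L[j] ≤ lamPos L[i] L[m] := by
  have hle := lamPos_le_of_sameSuffix (hgen _ i j m hij hjm hm (sameSuffix_lamPos L[i] L[m]))
  have := lamPos_le L[i] L[m]
  simp only [List.get_eq_getElem] at hle
  omega

section Greedy

variable {α : Type*} {E : α → α → Prop} {L M : List α}

lemma take_add_two_eq_of_greedy [DecidableEq α] {d : α → α → ℕ}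
    (hLnd : L.Nodup) (hchain : L.IsChain E)
    (hmono : ∀ {i j m} (_ : i ≤ j) (_ : j ≤ m) (hm : m < L.length), d L[i] L[j] ≤ d L[i] L[m])
    {k : ℕ} (hk : k + 1 < M.length) (hpre : M.take (k + 1) = L.take (k + 1))
    (hmem : M[k + 1] ∈ L) (hnew : M[k + 1] ∉ M.take (k + 1))
    (hmin : ∀ y ∈ L, E M[k] y → y ∉ M.take (k + 1) →
      d M[k] M[k + 1] < d M[k] y ∨
        (d M[k] M[k + 1] = d M[k] y ∧ L.idxOf M[k + 1] ≤ L.idxOf y)) :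
    M.take (k + 2) = L.take (k + 2) := by
  have hkL : k < L.length := by
    have := congrArg List.length hpre
    simp only [List.length_take] at this
    omega
  have hMk : M[k] = L[k] := by
    simpa [List.getElem?_take, List.getElem?_eq_getElem hkL,
      List.getElem?_eq_getElem (Nat.lt_of_succ_lt hk)] using congrArg (·[k]?) hpre
  set j := L.idxOf M[k + 1]
  have hj : j < L.length := List.idxOf_lt_length_iff.mpr hmem
  have hLj : L[j] = M[k + 1] := List.getElem_idxOf hj
  have hkj : k + 1 ≤ j := by
    by_contra hlt
    exact hnew (hpre ▸ List.mem_take_iff_getElem.mpr ⟨j, by omega, hLj⟩)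
  have hnext : L[k + 1] ∉ M.take (k + 1) := by
    rw [hpre, List.mem_take_iff_getElem]
    rintro ⟨i, hi, hLi⟩
    have := (hLnd.getElem_inj_iff).mp hLi
    omega
  have hedge : E M[k] L[k + 1] := hMk ▸ hchain.getElem k (by omega)
  have hj_eq : j = k + 1 := by
    rcases hmin _ (List.getElem_mem _) hedge hnext with hlt | ⟨-, hidx⟩
    · have := hmono (Nat.le_add_right k 1) hkj hj
      rw [hMk, ← hLj] at hlt
      omega
    · rw [hLnd.idxOf_getElem] at hidx
      omega
  have hnext_eq : M[k + 1] = L[k + 1] := by simp only [← hLj, hj_eq]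
  rw [List.take_add_one (i := k + 1), List.take_add_one (i := k + 1), hpre,
    List.getElem?_eq_getElem hk, List.getElem?_eq_getElem (by omega), hnext_eq]

lemma eq_of_prefix_of_forall_mem (hLnd : L.Nodup) (hchain : L.IsChain E) (hpre : M <+: L)
    (hne : M ≠ []) (hstuck : ∀ y ∈ L, E (M.getLast hne) y → y ∈ M) : M = L := by
  by_contra hML
  have hlen : M.length < L.length :=
    lt_of_le_of_ne hpre.length_le fun h => hML (hpre.eq_of_length h)
  have hpos : 0 < M.length := List.length_pos_iff.mpr hne
  have hlast : M.getLast hne = L[M.length - 1] := by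
    rw [List.getLast_eq_getElem, hpre.getElem]
  have hedge := hchain.getElem (M.length - 1) (by omega)
  obtain ⟨i, hi, hMi⟩ := List.mem_iff_getElem.mp (hstuck _ (List.getElem_mem _) (hlast ▸ hedge))
  rw [hpre.getElem, hLnd.getElem_inj_iff] at hMi
  omega

end Greedy

theorem greedy_computes_genlex_hamPath {n : ℕ} (X : Finset (Fin n → Bool))
    (E : (Fin n → Bool) → (Fin n → Bool) → Prop)
    (L : List (Fin n → Bool)) (hL : IsOrdering X L) (hgen : IsGenlex L)
    (hham : L.Chain' E)
    (M : List (Fin n → Bool))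
    (hMsub : ∀ x ∈ M, x ∈ X)
    (hhead : M.head? = L.head?)
    (hstep : ∀ (k : ℕ) (hk : k + 1 < M.length),
      (E (M.get ⟨k, by omega⟩) (M.get ⟨k + 1, hk⟩) ∧
        M.get ⟨k + 1, hk⟩ ∉ M.take (k + 1)) ∧
      (∀ y ∈ X, E (M.get ⟨k, by omega⟩) y → y ∉ M.take (k + 1) →
        lamPos (M.get ⟨k, by omega⟩) (M.get ⟨k + 1, hk⟩) <
          lamPos (M.get ⟨k, by omega⟩) y ∨
        (lamPos (M.get ⟨k, by omega⟩) (M.get ⟨k + 1, hk⟩) =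
            lamPos (M.get ⟨k, by omega⟩) y ∧
          L.idxOf (M.get ⟨k + 1, hk⟩) ≤ L.idxOf y)))
    (hterm : ∀ hne : M ≠ [], ∀ y ∈ X, E (M.getLast hne) y → y ∈ M) :
    M = L := by
  obtain ⟨hLnd, hLX⟩ := hL
  simp only [List.get_eq_getElem, ← hLX] at hstep
  simp only [← hLX] at hMsub hterm
  have htake : ∀ k ≤ M.length, M.take k = L.take k := by
    intro k hk
    induction k with
    | zero => rfl
    | succ k ih =>
      cases k with
      | zero => simp only [zero_add, List.take_one, hhead]
      | succ k =>
        obtain ⟨⟨-, hnew⟩, hmin⟩ := hstep k hk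
        exact take_add_two_eq_of_greedy hLnd hham hgen.lamPos_mono hk (ih (by omega))
          (hMsub _ (List.getElem_mem _)) hnew hmin
  have hpre : M <+: L := by
    rw [← List.take_length (l := M), htake _ le_rfl]
    exact List.take_prefix _ _
  rcases eq_or_ne M [] with rfl | hne
  · simpa [eq_comm] using hhead
  · exact eq_of_prefix_of_forall_mem hLnd hham hpre hne (hterm hne)
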